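/- arXiv:2505.24122 — 6 statements merged into one kernel-verified Lean document; each statement's English description precedes it below -/
import Mathlib

section
/- Let Stir^B_q(n,k) be defined by the recurrence Stir^B_q(n,k) = Stir^B_q(n-1,k-1) + [2k+1]_q · Stir^B_q(n-1,k) with Stir^B_q(0,k) = 1 if k = 0 and 0 otherwise, where [m]_q = 1 + q + ... + q^{m-1}. Let [2k]!!_q = [2k]_q·[2k-2]_q···[2]_q. Then for all n ≥ 1 and 0 ≤ k ≤ n, the sum over subsets J ⊆ {1,...,n} with |J| = n−k of the product ∏_{i=1}^n [st^B_i(J)+1]_q equals [2k]!!_q · Stir^B_q(n,k). -/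
/-- The q-integer `[m]_q = 1 + q + ⋯ + q^{m-1}` in `ℤ[q]`. -/
noncomputable def qint (m : ℕ) : Polynomial ℤ := ∑ i ∈ Finset.range m, Polynomial.X ^ i

/-- The q-double factorial `[2k]!!_q = [2k]_q [2k−2]_q ⋯ [2]_q`. -/
noncomputable def qdfact (k : ℕ) : Polynomial ℤ := ∏ j ∈ Finset.range k, qint (2 * (j + 1))

/-- The type B q-Stirling numbers, defined by
`Stir^B_q(n,k) = Stir^B_q(n−1,k−1) + [2k+1]_q·Stir^B_q(n−1,k)` with
`Stir^B_q(0,k) = [k = 0]`. -/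
noncomputable def StirB : ℕ → ℕ → Polynomial ℤ
  | 0, k => if k = 0 then 1 else 0
  | n + 1, 0 => qint 1 * StirB n 0
  | n + 1, k + 1 => StirB n k + qint (2 * (k + 1) + 1) * StirB n (k + 1)

/-- The type B staircase `st^B_i(J) = 2·|{1,…,i−1} \ J| + [i ∉ J]`. -/
def stB (J : Finset ℕ) (i : ℕ) : ℕ :=
  2 * ((Finset.Icc 1 (i - 1)) \ J).card + (if i ∉ J then 1 else 0)

/-!
Induct on `n`, splitting the subsets `J ⊆ [n+1]` with `|J| = n + 1 - k` according to whether
`n + 1 ∈ J`. The element `n + 1` does not affect `st^B_i(J)` for `i ≤ n`, and the last factor is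
`[2k+1]_q` if `n + 1 ∈ J` and `[2k]_q` otherwise. So the sums `S(n,k)` satisfy
`S(n+1,k) = [2k]_q S(n,k-1) + [2k+1]_q S(n,k)`, which is the recurrence of `[2k]!!_q Stir^B_q(n,k)`
because `[2k]!!_q = [2k]_q [2k-2]!!_q`.
-/

open Finset Polynomial

lemma stB_insert_of_lt {J : Finset ℕ} {a i : ℕ} (h : i < a) : stB (insert a J) i = stB J i := by
  have ha : a ∉ Icc 1 (i - 1) := by simp only [mem_Icc]; omega
  simp only [stB, sdiff_insert_of_notMem ha, mem_insert, h.ne, false_or]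

lemma card_Icc_sdiff_of_subset {n : ℕ} {J : Finset ℕ} (hJ : J ⊆ Icc 1 n) :
    #(Icc 1 n \ J) = n - #J := by
  rw [card_sdiff_of_subset hJ, Nat.card_Icc, Nat.add_sub_cancel]

lemma succ_notMem_of_subset_Icc {n : ℕ} {J : Finset ℕ} (hJ : J ⊆ Icc 1 n) : n + 1 ∉ J :=
  fun h => by simpa using hJ h

lemma stB_succ_of_subset {n : ℕ} {J : Finset ℕ} (hJ : J ⊆ Icc 1 n) :
    stB J (n + 1) = 2 * (n - #J) + 1 := by
  simp [stB, card_Icc_sdiff_of_subset hJ, succ_notMem_of_subset_Icc hJ]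

lemma stB_insert_succ_of_subset {n : ℕ} {J : Finset ℕ} (hJ : J ⊆ Icc 1 n) :
    stB (insert (n + 1) J) (n + 1) = 2 * (n - #J) := by
  have hn : n + 1 ∉ Icc 1 n := by simp
  simp [stB, sdiff_insert_of_notMem hn, card_Icc_sdiff_of_subset hJ]

noncomputable def stBWeight (n : ℕ) (J : Finset ℕ) : ℤ[X] :=
  ∏ i ∈ Icc 1 n, qint (stB J i + 1)

lemma stBWeight_succ_of_subset {n : ℕ} {J : Finset ℕ} (hJ : J ⊆ Icc 1 n) :
    stBWeight (n + 1) J = stBWeight n J * qint (2 * (n - #J) + 2) := by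
  rw [stBWeight, prod_Icc_succ_top (by omega), stB_succ_of_subset hJ]
  rfl

lemma stBWeight_succ_insert_of_subset {n : ℕ} {J : Finset ℕ} (hJ : J ⊆ Icc 1 n) :
    stBWeight (n + 1) (insert (n + 1) J) = stBWeight n J * qint (2 * (n - #J) + 1) := by
  rw [stBWeight, prod_Icc_succ_top (by omega), stB_insert_succ_of_subset hJ]
  congr 1
  exact prod_congr rfl fun i hi => by rw [stB_insert_of_lt (by simp at hi; omega)]

-- Indexing by `#J + k = n` rather than `#J = n - k` avoids truncated subtraction.
noncomputable def stBSum (n k : ℕ) : ℤ[X] :=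
  ∑ J ∈ (Icc 1 n).powerset with #J + k = n, stBWeight n J

lemma stBSum_succ (n k : ℕ) :
    stBSum (n + 1) k = (∑ J ∈ (Icc 1 n).powerset with #J + k = n + 1, stBWeight n J) * qint (2 * k)
      + qint (2 * k + 1) * stBSum n k := by
  have hIcc : Icc 1 (n + 1) = insert (n + 1) (Icc 1 n) := by ext; simp; omega
  rw [stBSum, stBSum, hIcc, sum_filter, sum_powerset_insert (by simp), sum_mul, mul_sum,
    sum_filter, sum_filter]
  refine congrArg₂ (· + ·) (sum_congr rfl fun J hJ => ?_) (sum_congr rfl fun J hJ => ?_) <;>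
    rw [mem_powerset] at hJ
  · have hcard : #J ≤ n := by simpa using card_le_card hJ
    rw [stBWeight_succ_of_subset hJ]
    split_ifs with h
    · congr 2
      omega
    · rfl
  · rw [card_insert_of_notMem (succ_notMem_of_subset_Icc hJ), stBWeight_succ_insert_of_subset hJ,
      add_right_comm]
    simp only [Nat.add_right_cancel_iff]
    split_ifs with h
    · rw [mul_comm, ← h, Nat.add_sub_cancel_left]
    · rfl

lemma qdfact_succ (k : ℕ) : qdfact (k + 1) = qdfact k * qint (2 * (k + 1)) :=
  prod_range_succ _ _

theorem stBSum_eq (n k : ℕ) : stBSum n k = qdfact k * StirB n k := by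
  induction n generalizing k with
  | zero => cases k <;> simp [stBSum, stBWeight, qdfact, StirB, filter_singleton]
  | succ n ih =>
    rw [stBSum_succ]
    cases k with
    | zero => simp [ih, qint, StirB]
    | succ k =>
      have hsum :
          ∑ J ∈ (Icc 1 n).powerset with #J + (k + 1) = n + 1, stBWeight n J = stBSum n k := by
        simp only [stBSum, ← add_assoc, Nat.add_right_cancel_iff]
      rw [hsum, ih, ih, qdfact_succ, StirB]
      ring

theorem stmt2_general (n k : ℕ) (hk : k ≤ n) :
    ∑ J ∈ (Finset.Icc 1 n).powerset.filter (fun J => J.card = n - k),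
      ∏ i ∈ Finset.Icc 1 n, qint (stB J i + 1)
    = qdfact k * StirB n k := by
  rw [← stBSum_eq, stBSum]
  exact sum_congr (filter_congr fun J _ => by omega) fun _ _ => rfl

/-- `∑_{J ⊆ [n], |J| = n−k} ∏_{i=1}^n [st^B_i(J)+1]_q = [2k]!!_q · Stir^B_q(n,k)`. -/
theorem stmt2 (n k : ℕ) (hn : 1 ≤ n) (hk : k ≤ n) :
    ∑ J ∈ (Finset.Icc 1 n).powerset.filter (fun J => J.card = n - k),
      ∏ i ∈ Finset.Icc 1 n, qint (stB J i + 1)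
    = qdfact k * StirB n k :=
  stmt2_general n k hk
end

section
/- For any subset S ⊆ {1,...,n} with a ∈ S and b ∉ S, and integer r > 1: ∂_a h²_r(S) = (x_a² − x_b²)·∂_a h²_{r−1}(S ∪ {b}) + 2x_a·h²_{r−1}(S ∪ {b}), where h²_r(T) is obtained from the complete homogeneous symmetric polynomial h_r in the variables indexed by T by replacing each variable x_i with x_i². -/
open MvPolynomial

/-!
Splitting the monomials of `h²_{r+1}(T)` according to whether they involve `x_c` gives
`h²_{r+1}(T) = h²_{r+1}(T \ {c}) + x_c² h²_r(T)` for every `c ∈ T`. Differentiating this with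
respect to `x_a` once for `c = a` and once for `c = b`, with `T = S ∪ {b}`, and comparing the two
expressions for `∂_a h²_r(S ∪ {b})` gives the identity.
-/

/-- `h²_r(S)`: the complete homogeneous symmetric polynomial of degree `r` in the
variables indexed by `S`, with each variable replaced by its square. -/
noncomputable def h2poly {n : ℕ} (S : Finset (Fin n)) (r : ℕ) : MvPolynomial (Fin n) ℂ :=
  ∑ m ∈ S.sym r, ((m : Multiset (Fin n)).map (fun i => X i ^ 2)).prod

namespace Finset

variable {α : Type*} [DecidableEq α]

theorem sym_insert_succ (b : α) (S : Finset α) (r : ℕ) :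
    (insert b S).sym (r + 1) = S.sym (r + 1) ∪ ((insert b S).sym r).image (Sym.cons b) := by
  ext m
  simp only [mem_union, mem_image, mem_sym_iff, mem_insert]
  constructor
  · intro hm
    by_cases hbm : b ∈ m
    · refine Or.inr ⟨m.erase b hbm, fun x hx => hm x (Multiset.mem_of_mem_erase hx),
        Sym.cons_erase hbm⟩
    · exact Or.inl fun x hx => (hm x hx).resolve_left (by rintro rfl; exact hbm hx)
  · rintro (hm | ⟨m', hm', rfl⟩) x hx
    · exact Or.inr (hm x hx)
    · rcases Sym.mem_cons.mp hx with rfl | hx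
      exacts [Or.inl rfl, hm' x hx]

theorem sum_sym_insert_succ {M : Type*} [AddCommMonoid M] {b : α} {S : Finset α} (hb : b ∉ S)
    (r : ℕ) (f : Sym α (r + 1) → M) :
    ∑ m ∈ (insert b S).sym (r + 1), f m
      = ∑ m ∈ S.sym (r + 1), f m + ∑ m ∈ (insert b S).sym r, f (b ::ₛ m) := by
  have hdisj : Disjoint (S.sym (r + 1)) (((insert b S).sym r).image (Sym.cons b)) := by
    refine disjoint_left.mpr fun m hm hm' => hb ?_
    obtain ⟨m', -, rfl⟩ := mem_image.mp hm'
    exact mem_sym_iff.mp hm b (Sym.mem_cons_self b m')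
  rw [sym_insert_succ, sum_union hdisj,
    sum_image fun x _ y _ h => (Sym.cons_inj_right b x y).mp h]

end Finset

section h2poly

variable {n : ℕ}

theorem h2poly_insert {S : Finset (Fin n)} {b : Fin n} (hb : b ∉ S) (r : ℕ) :
    h2poly (insert b S) (r + 1) = h2poly S (r + 1) + X b ^ 2 * h2poly (insert b S) r := by
  simp only [h2poly, Finset.sum_sym_insert_succ hb, Finset.mul_sum, Sym.coe_cons,
    Multiset.map_cons, Multiset.prod_cons]

theorem h2poly_mem_supported (S : Finset (Fin n)) (r : ℕ) :
    h2poly S r ∈ supported ℂ (S : Set (Fin n)) :=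
  Subalgebra.sum_mem _ fun m hm => Subalgebra.multiset_prod_mem _ fun p hp => by
    obtain ⟨i, hi, rfl⟩ := Multiset.mem_map.mp hp
    exact Subalgebra.pow_mem _ (X_mem_supported.mpr (Finset.mem_sym_iff.mp hm i hi)) 2

theorem pderiv_h2poly_of_notMem {S : Finset (Fin n)} {a : Fin n} (ha : a ∉ S) (r : ℕ) :
    pderiv a (h2poly S r) = 0 :=
  pderiv_eq_zero_of_notMem_vars fun h => ha (mem_supported.mp (h2poly_mem_supported S r) h)

theorem pderiv_h2poly_succ_of_mem {T : Finset (Fin n)} {a : Fin n} (ha : a ∈ T) (r : ℕ) :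
    pderiv a (h2poly T (r + 1))
      = 2 * X a * h2poly T r + X a ^ 2 * pderiv a (h2poly T r) := by
  have hsplit := h2poly_insert (Finset.notMem_erase a T) r
  rw [Finset.insert_erase ha] at hsplit
  rw [hsplit, map_add, pderiv_mul, pderiv_h2poly_of_notMem (Finset.notMem_erase a T),
    pderiv_pow, pderiv_X_self]
  push_cast
  ring

end h2poly

/-- for `a ∈ S`, `b ∉ S`, `r > 1`:
`∂_a h²_r(S) = (x_a² − x_b²)·∂_a h²_{r−1}(S ∪ {b}) + 2x_a·h²_{r−1}(S ∪ {b})`. -/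
theorem stmt5 {n : ℕ} (S : Finset (Fin n)) (a b : Fin n) (ha : a ∈ S) (hb : b ∉ S)
    (r : ℕ) (hr : 1 < r) :
    pderiv a (h2poly S r)
      = (X a ^ 2 - X b ^ 2) * pderiv a (h2poly (insert b S) (r - 1))
        + 2 * X a * h2poly (insert b S) (r - 1) := by
  obtain ⟨s, rfl⟩ : ∃ s, r = s + 1 := ⟨r - 1, by omega⟩
  rw [Nat.add_sub_cancel]
  have hab : a ≠ b := fun h => hb (h ▸ ha)
  have hsplit := congrArg (pderiv a) (h2poly_insert hb s)
  rw [pderiv_h2poly_succ_of_mem (Finset.mem_insert_of_mem ha), map_add, pderiv_mul,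
    pderiv_pow, pderiv_X_of_ne hab.symm] at hsplit
  linear_combination -hsplit
end

section
/- For any subset S of {1,...,n} and any integer r > n − |S|, the polynomial h_r(S) (complete homogeneous symmetric polynomial of degree r in the variables indexed by S) lies in the ideal of ℂ[x_1,...,x_n] generated by the power sums p_1, ..., p_n (equivalently, by the symmetric polynomials with vanishing constant term). -/
/-!
Removing a variable `a ∉ S` gives `h_{r+1}(S) = h_{r+1}(S ∪ {a}) - x_a h_r(S ∪ {a})`, which
lowers `n - |S|` by one and `r` by at most one. Iterating reduces the claim to `S = {1, …, n}`,
where `h_r` is a symmetric polynomial without constant term. By the fundamental theorem of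
symmetric polynomials it lies in the ideal of the `e_k`, `k ≥ 1`, and by Newton's identities
each `e_k` lies in the ideal of the power sums `p_1, …, p_n` once `k` is invertible.
-/

open MvPolynomial

/-- `h_r(S)`: the complete homogeneous symmetric polynomial of degree `r`
in the variables indexed by `S`. -/
noncomputable def hpoly {n : ℕ} (S : Finset (Fin n)) (r : ℕ) : MvPolynomial (Fin n) ℂ :=
  ∑ m ∈ S.sym r, ((m : Multiset (Fin n)).map X).prod

open Finset

namespace MvPolynomial

variable {σ R : Type*}

section CommSemiring

variable [CommSemiring R]

theorem aeval_sub_algebraMap_constantCoeff_mem_span {S ι : Type*} [CommRing S] [Algebra R S]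
    (v : ι → S) (p : MvPolynomial ι R) :
    aeval v p - algebraMap R S (constantCoeff p) ∈ Ideal.span (Set.range v) := by
  induction p using MvPolynomial.induction_on with
  | C a => simp
  | add p q hp hq => simpa only [map_add, add_sub_add_comm] using add_mem hp hq
  | mul_X p i _ =>
    simpa only [map_mul, aeval_X, constantCoeff_X, mul_zero, map_zero, sub_zero]
      using Ideal.mul_mem_left _ (aeval v p) (Ideal.subset_span (Set.mem_range_self i))

theorem constantCoeff_aeval_of_constantCoeff_eq_zero {ι : Type*} {v : ι → MvPolynomial σ R}
    (hv : ∀ i, constantCoeff (v i) = 0) (p : MvPolynomial ι R) :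
    constantCoeff (aeval v p) = constantCoeff p := by
  change ((constantCoeff : MvPolynomial σ R →+* R).comp (aeval v).toRingHom) p = _
  congr 1
  exact MvPolynomial.ringHom_ext (fun _ => by simp) (fun _ => by simp [hv])

variable [Fintype σ]

theorem constantCoeff_esymm_eq_zero {k : ℕ} (hk : k ≠ 0) : constantCoeff (esymm σ R k) = 0 := by
  simp only [esymm, map_sum, map_prod, constantCoeff_X, prod_const]
  refine sum_eq_zero fun t ht => ?_
  rw [(mem_powersetCard.1 ht).2, zero_pow hk]

theorem constantCoeff_hsymm_eq_zero [DecidableEq σ] {k : ℕ} (hk : k ≠ 0) :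
    constantCoeff (hsymm σ R k) = 0 := by
  simp only [hsymm, map_sum]
  refine sum_eq_zero fun s _ => ?_
  rw [← Multiset.prod_hom, Multiset.map_map, Function.comp_def]
  simp only [constantCoeff_X, Multiset.map_const', Multiset.prod_replicate, Sym.val_eq_coe,
    Sym.card_coe, zero_pow hk]

end CommSemiring

variable [CommRing R] [Fintype σ]

theorem IsSymmetric.mem_span_esymm {f : MvPolynomial σ R} (hf : f.IsSymmetric)
    (h0 : constantCoeff f = 0) :
    f ∈ Ideal.span (esymm σ R '' Set.Icc 1 (Fintype.card σ)) := by
  let e : Fin (Fintype.card σ) → MvPolynomial σ R := fun i ↦ esymm σ R (i + 1)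
  obtain ⟨g, hg⟩ := esymmAlgHom_surjective (R := R) (n := Fintype.card σ) le_rfl ⟨f, hf⟩
  have hfg : f = aeval e g := by rw [← esymmAlgHom_apply, hg]
  have hg0 : constantCoeff g = 0 := by
    rwa [hfg, constantCoeff_aeval_of_constantCoeff_eq_zero
      (fun i => constantCoeff_esymm_eq_zero i.val.succ_ne_zero)] at h0
  have hf_mem := aeval_sub_algebraMap_constantCoeff_mem_span e g
  rw [hg0, map_zero, sub_zero, ← hfg] at hf_mem
  refine Ideal.span_mono ?_ hf_mem
  rintro _ ⟨i, rfl⟩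
  exact ⟨i + 1, ⟨by omega, by omega⟩, rfl⟩

variable [Algebra ℚ R]

theorem esymm_mem_span_psum {k : ℕ} (hk : 1 ≤ k) :
    esymm σ R k ∈ Ideal.span (psum σ R '' Set.Icc 1 (Fintype.card σ)) := by
  by_cases hkσ : k ≤ Fintype.card σ
  · have hunit : IsUnit (k : MvPolynomial σ R) := by
      simpa using ((Nat.cast_ne_zero.2 (by omega) : (k : ℚ) ≠ 0).isUnit.map
        (algebraMap ℚ (MvPolynomial σ R)))
    rw [← Ideal.unit_mul_mem_iff_mem _ hunit, mul_esymm_eq_sum]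
    refine Ideal.mul_mem_left _ _ (Ideal.sum_mem _ fun a ha => Ideal.mul_mem_left _ _ ?_)
    rw [mem_filter, HasAntidiagonal.mem_antidiagonal] at ha
    exact Ideal.subset_span ⟨a.2, ⟨by omega, by omega⟩, rfl⟩
  · rw [esymm, powersetCard_eq_empty.2 (by simpa using hkσ), sum_empty]
    exact zero_mem _

theorem IsSymmetric.mem_span_psum {f : MvPolynomial σ R} (hf : f.IsSymmetric)
    (h0 : constantCoeff f = 0) :
    f ∈ Ideal.span (psum σ R '' Set.Icc 1 (Fintype.card σ)) := by
  refine Ideal.span_le.2 ?_ (hf.mem_span_esymm h0)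
  rintro _ ⟨k, hk, rfl⟩
  exact esymm_mem_span_psum hk.1

end MvPolynomial

section hpoly

variable {n : ℕ}

theorem hpoly_univ (r : ℕ) : hpoly (univ : Finset (Fin n)) r = hsymm (Fin n) ℂ r := by
  rw [hpoly, sym_univ]
  rfl

theorem hpoly_insert {S : Finset (Fin n)} {a : Fin n} (ha : a ∉ S) (r : ℕ) :
    hpoly (insert a S) r = ∑ i ∈ range (r + 1), X a ^ i * hpoly S (r - i) := by
  rw [hpoly, ← sum_coe_sort ((insert a S).sym r), ← (symInsertEquiv ha).symm.sum_comp,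
    Fintype.sum_sigma, ← Fin.sum_univ_eq_sum_range]
  refine Fintype.sum_congr _ _ fun i => ?_
  rw [hpoly, ← sum_coe_sort (S.sym _), mul_sum]
  refine Fintype.sum_congr _ _ fun m => ?_
  simp [Sym.coe_fill, Sym.coe_replicate, mul_comm]

theorem hpoly_insert_succ {S : Finset (Fin n)} {a : Fin n} (ha : a ∉ S) (r : ℕ) :
    hpoly (insert a S) (r + 1) = hpoly S (r + 1) + X a * hpoly (insert a S) r := by
  rw [hpoly_insert ha, hpoly_insert ha, sum_range_succ', mul_sum, add_comm]
  simp [pow_succ, mul_comm, mul_left_comm]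

end hpoly

/-- for `r > n − |S|`, `h_r(S)` lies in the ideal generated by the
power sums `p_1, …, p_n`. -/
theorem stmt6 {n : ℕ} (S : Finset (Fin n)) (r : ℕ) (hr : n - S.card < r) :
    hpoly S r ∈ Ideal.span ((fun k => ∑ i : Fin n, X i ^ k) '' Set.Icc 1 n) := by
  change hpoly S r ∈ Ideal.span (psum (Fin n) ℂ '' Set.Icc 1 n)
  induction hk : n - #S generalizing S r with
  | zero =>
    have hS : #S = n := le_antisymm (by simpa using card_le_univ S) (by omega)
    obtain rfl : S = univ := (card_eq_iff_eq_univ S).1 (by rwa [Fintype.card_fin])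
    rw [hpoly_univ]
    simpa only [Fintype.card_fin] using
      (hsymm_isSymmetric (Fin n) ℂ r).mem_span_psum (constantCoeff_hsymm_eq_zero (by omega))
  | succ k ih =>
    obtain ⟨a, ha⟩ : ∃ a, a ∉ S := by
      by_contra! h
      simp [eq_univ_iff_forall.2 h] at hk
    obtain ⟨r, rfl⟩ := Nat.exists_eq_add_one.2 (by omega : 0 < r)
    have hcard : n - #(insert a S) = k := by rw [card_insert_of_notMem ha]; omega
    rw [eq_sub_of_add_eq (hpoly_insert_succ ha r).symm]
    exact sub_mem (ih _ _ (by omega) hcard) (Ideal.mul_mem_left _ _ (ih _ _ (by omega) hcard))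
end

section
/- For any subset S of {1,...,n} and any integer r > n − |S|, the polynomial h²_r(S) lies in the type B coinvariant ideal I^B_n = (p_2, p_4, ..., p_{2n}) of ℂ[x_1,...,x_n], where h²_r(S) is obtained from h_r(S) by substituting x_i² for each x_i. -/
open MvPolynomial

/-!
Over a `ℚ`-algebra, Newton's identities put `e_1, …, e_N` into the ideal `(p_1, …, p_N)` of the
power sums, so by the fundamental theorem every symmetric polynomial without constant term lies
in it; in particular `h_r(σ)` does for `r ≥ 1`. Removing a variable `a` from `T ∪ {a}` gives
`h_r(T) = h_r(T ∪ {a}) - x_a h_{r-1}(T ∪ {a})`, so induction on `N - |S|` yields `h_r(S)` in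
the ideal whenever `r > N - |S|`. Substituting `x_i ↦ x_i²` sends `p_k` to `p_{2k}` and `h_r(S)`
to `h²_r(S)`.
-/

namespace MvPolynomial

variable {σ R : Type*} [CommRing R]

theorem aeval_sub_algebraMap_constantCoeff_mem {ι A : Type*} [CommRing A] [Algebra R A]
    {I : Ideal A} {f : ι → A} (q : MvPolynomial ι R) (hf : ∀ i, f i ∈ I) :
    aeval f q - algebraMap R A (constantCoeff q) ∈ I := by
  induction q using MvPolynomial.induction_on with
  | C a => simp
  | add p q hp hq => simpa only [map_add, add_sub_add_comm] using I.add_mem hp hq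
  | mul_X p i hp => simpa using I.mul_mem_left _ (hf i)

section PsumIdeal

variable (σ R) [Fintype σ]

noncomputable def psumIdeal : Ideal (MvPolynomial σ R) :=
  Ideal.span (psum σ R '' Set.Icc 1 (Fintype.card σ))

variable {σ R}

theorem psum_mem_psumIdeal {k : ℕ} (hk0 : k ≠ 0) (hk : k ≤ Fintype.card σ) :
    psum σ R k ∈ psumIdeal σ R :=
  Ideal.subset_span ⟨k, ⟨Nat.one_le_iff_ne_zero.mpr hk0, hk⟩, rfl⟩

theorem constantCoeff_eq_zero_of_mem_psumIdeal {p : MvPolynomial σ R} (hp : p ∈ psumIdeal σ R) :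
    constantCoeff p = 0 := by
  suffices psumIdeal σ R ≤ RingHom.ker constantCoeff from this hp
  rw [psumIdeal, Ideal.span_le]
  rintro _ ⟨k, ⟨hk, -⟩, rfl⟩
  simp [psum, zero_pow (Nat.one_le_iff_ne_zero.mp hk)]

theorem esymm_mem_psumIdeal [Algebra ℚ R] {k : ℕ} (hk0 : k ≠ 0) (hk : k ≤ Fintype.card σ) :
    esymm σ R k ∈ psumIdeal σ R := by
  have hmul : (k : MvPolynomial σ R) * esymm σ R k ∈ psumIdeal σ R := by
    rw [mul_esymm_eq_sum]
    refine Ideal.mul_mem_left _ _ (Ideal.sum_mem _ fun a ha => Ideal.mul_mem_left _ _ ?_)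
    rw [Finset.mem_filter, Finset.HasAntidiagonal.mem_antidiagonal] at ha
    exact psum_mem_psumIdeal (by omega) (by omega)
  have hunit : IsUnit (k : MvPolynomial σ R) := by
    simpa using ((Nat.cast_ne_zero.mpr hk0 : (k : ℚ) ≠ 0).isUnit.map
      (algebraMap ℚ (MvPolynomial σ R)))
  exact (Ideal.unit_mul_mem_iff_mem _ hunit).mp hmul

theorem IsSymmetric.mem_psumIdeal [Algebra ℚ R] {p : MvPolynomial σ R} (hp : p.IsSymmetric)
    (hp0 : constantCoeff p = 0) : p ∈ psumIdeal σ R := by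
  obtain ⟨q, hq⟩ := esymmAlgHom_surjective R le_rfl ⟨p, hp⟩
  have hpq : aeval (fun i : Fin (Fintype.card σ) => esymm σ R (i + 1)) q = p := by
    rw [← esymmAlgHom_apply, hq]
  have hmem := aeval_sub_algebraMap_constantCoeff_mem (I := psumIdeal σ R) q
    fun i => esymm_mem_psumIdeal (Nat.succ_ne_zero _) i.isLt
  rw [hpq] at hmem
  have hq0 : constantCoeff q = 0 := by
    simpa [hp0] using constantCoeff_eq_zero_of_mem_psumIdeal hmem
  simpa [hq0] using hmem

end PsumIdeal

section HsymmOn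

variable [DecidableEq σ]

variable (R) in
noncomputable def hsymmOn (S : Finset σ) (r : ℕ) : MvPolynomial σ R :=
  ∑ m ∈ S.sym r, ((m : Multiset σ).map X).prod

variable (R) in
theorem hsymmOn_univ [Fintype σ] (r : ℕ) : hsymmOn R (Finset.univ : Finset σ) r = hsymm σ R r := by
  rw [hsymmOn, Finset.sym_univ, hsymm]
  rfl

theorem constantCoeff_hsymmOn (S : Finset σ) {r : ℕ} (hr : r ≠ 0) :
    constantCoeff (hsymmOn R S r) = 0 := by
  rw [hsymmOn, map_sum]
  refine Finset.sum_eq_zero fun m _ => ?_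
  obtain ⟨a, ha⟩ := Multiset.card_pos_iff_exists_mem.mp
    (show 0 < Multiset.card (m : Multiset σ) by simpa [Nat.pos_iff_ne_zero])
  rw [map_multiset_prod, Multiset.map_map]
  exact Multiset.prod_eq_zero (Multiset.mem_map.mpr ⟨a, ha, by simp⟩)

variable (R) in
theorem hsymmOn_insert {a : σ} {T : Finset σ} (h : a ∉ T) (r : ℕ) :
    hsymmOn R (insert a T) r = ∑ i ∈ Finset.range (r + 1), X a ^ i * hsymmOn R T (r - i) := by
  rw [hsymmOn, ← Finset.sum_coe_sort, ← (Finset.symInsertEquiv h).symm.sum_comp,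
    ← Finset.univ_sigma_univ, Finset.sum_sigma,
    ← Fin.sum_univ_eq_sum_range (fun i => X a ^ i * hsymmOn R T (r - i))]
  refine Finset.sum_congr rfl fun i _ => ?_
  rw [hsymmOn, ← Finset.sum_coe_sort (T.sym (r - i)), Finset.mul_sum]
  refine Finset.sum_congr rfl fun m _ => ?_
  rw [Finset.symInsertEquiv_symm_apply_coe, Sym.coe_fill, Multiset.map_add, Multiset.prod_add,
    Sym.coe_replicate, Multiset.map_replicate, Multiset.prod_replicate, mul_comm]

variable (R) in
theorem hsymmOn_insert_succ {a : σ} {T : Finset σ} (h : a ∉ T) (r : ℕ) :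
    hsymmOn R (insert a T) (r + 1) = hsymmOn R T (r + 1) + X a * hsymmOn R (insert a T) r := by
  rw [hsymmOn_insert R h (r + 1), hsymmOn_insert R h r, Finset.sum_range_succ', Finset.mul_sum]
  simp [pow_succ', mul_assoc, add_comm]

theorem hsymmOn_mem_psumIdeal [Fintype σ] [Algebra ℚ R] {S : Finset σ} {r : ℕ}
    (hr : Sᶜ.card < r) : hsymmOn R S r ∈ psumIdeal σ R := by
  induction hS : Sᶜ.card generalizing S r with
  | zero =>
    rw [Finset.card_eq_zero, Finset.compl_eq_empty_iff] at hS
    subst hS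
    have hr0 : r ≠ 0 := by omega
    refine IsSymmetric.mem_psumIdeal ?_ (constantCoeff_hsymmOn _ hr0)
    exact hsymmOn_univ (σ := σ) R r ▸ hsymm_isSymmetric σ R r
  | succ m ih =>
    obtain ⟨a, ha⟩ := Finset.card_pos.mp (by omega : 0 < Sᶜ.card)
    have hcard : (insert a S)ᶜ.card = m := by
      rw [Finset.compl_insert, Finset.card_erase_of_mem ha, hS, Nat.add_sub_cancel]
    obtain ⟨s, rfl⟩ : ∃ s, r = s + 1 := Nat.exists_eq_add_one.mpr (by omega)
    rw [eq_sub_of_add_eq (hsymmOn_insert_succ R (Finset.mem_compl.mp ha) s).symm]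
    exact sub_mem (ih (by omega) hcard) (Ideal.mul_mem_left _ _ (ih (by omega) hcard))

end HsymmOn

theorem expand_psum [Fintype σ] (p k : ℕ) : expand p (psum σ R k) = psum σ R (p * k) := by
  simp [psum, pow_mul]

theorem map_expand_psumIdeal [Fintype σ] (p : ℕ) :
    (psumIdeal σ R).map (expand p) =
      Ideal.span ((fun k => psum σ R (p * k)) '' Set.Icc 1 (Fintype.card σ)) := by
  rw [psumIdeal, Ideal.map_span, Set.image_image]
  simp only [expand_psum]

end MvPolynomial

theorem h2poly_eq_expand_hsymmOn {n : ℕ} (S : Finset (Fin n)) (r : ℕ) :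
    h2poly S r = expand 2 (hsymmOn ℂ S r) := by
  simp only [h2poly, hsymmOn, map_sum, map_multiset_prod, Multiset.map_map, Function.comp_def,
    expand_X]

/-- for `r > n − |S|`, `h²_r(S)` lies in the type B coinvariant ideal
`I^B_n = (p_2, p_4, …, p_{2n})`. -/
theorem stmt7 {n : ℕ} (S : Finset (Fin n)) (r : ℕ) (hr : n - S.card < r) :
    h2poly S r ∈ Ideal.span ((fun k => ∑ i : Fin n, X i ^ (2 * k)) '' Set.Icc 1 n) := by
  have hmem : hsymmOn ℂ S r ∈ psumIdeal (Fin n) ℂ :=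
    hsymmOn_mem_psumIdeal (by rwa [Finset.card_compl, Fintype.card_fin])
  have hexp := Ideal.mem_map_of_mem (expand 2) hmem
  rwa [map_expand_psumIdeal, Fintype.card_fin, ← h2poly_eq_expand_hsymmOn] at hexp
end

section
/- The type B Vandermonde determinant δ^B_n = ∏_{i=1}^n x_i · ∏_{1≤i<j≤n}(x_i² − x_j²) does not belong to the ideal I^B_n = (p_2, p_4, ..., p_{2n}) of ℂ[x_1,...,x_n]; in fact (δ^B_n ⊙ δ^B_n) > 0, where f ⊙ g = f(∂_1,...,∂_n)(g). -/
/-!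
Use the factorial-free apolarity pairing `⟪f, g⟫ = ∑ₐ coeff a f * conj (coeff a g)`, for which
still `⟪f, f⟫ ≠ 0` when `f ≠ 0`. Up to sign, `δ^B_n` is the odd alternant `D = det (x_v ^ (2j+1))`,
whose coefficient at `x^a` is the determinant of the 0/1 matrix `M(a)_{vj} = [a_v = 2j+1]`.
Multiplying `x^a` by `x_i^{2k}` replaces row `i` of `M(a)` by row `i` of `M(a) S`, where `S` shifts
columns by `k`; by cofactor expansion the sum over `i` is `det M(a) · tr S = 0`. Hence `⟪·, D⟫`
kills the ideal `(p_2, …, p_{2n})`, while `⟪δ^B_n, D⟫ = ±⟪D, D⟫ ≠ 0`.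
-/

open MvPolynomial

/-- The type B Vandermonde `δ^B_n = ∏ᵢ x_i · ∏_{i<j} (x_i² − x_j²)`. -/
noncomputable def deltaB (n : ℕ) : MvPolynomial (Fin n) ℂ :=
  (∏ i : Fin n, X i) * ∏ i : Fin n, ∏ j ∈ Finset.Ioi i, (X i ^ 2 - X j ^ 2)

open Matrix Finset ComplexConjugate

namespace Matrix

variable {ι R : Type*} [Fintype ι] [DecidableEq ι] [CommRing R]

theorem det_updateRow_eq_sum_adjugate_mul (A : Matrix ι ι R) (i : ι) (r : ι → R) :
    (A.updateRow i r).det = ∑ j, adjugate A j i * r j := by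
  rw [← cramer_transpose_apply, cramer_eq_adjugate_mulVec, ← adjugate_transpose]
  rfl

theorem sum_det_updateRow_mul (A N : Matrix ι ι R) :
    ∑ i, (A.updateRow i ((A * N) i)).det = A.det * N.trace :=
  calc ∑ i, (A.updateRow i ((A * N) i)).det = (adjugate A * (A * N)).trace := by
        simp_rw [det_updateRow_eq_sum_adjugate_mul, trace, diag, mul_apply]
        exact sum_comm
    _ = A.det * N.trace := by
        rw [← Matrix.mul_assoc, adjugate_mul, smul_mul, Matrix.one_mul, trace_smul, smul_eq_mul]

end Matrix

theorem Ideal.apply_eq_zero_of_mem_span {A M F : Type*} [CommSemiring A] [AddCommMonoid M]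
    [FunLike F A M] [AddMonoidHomClass F A M] (L : F) {s : Set A}
    (hs : ∀ p ∈ s, ∀ g, L (g * p) = 0) {f : A} (hf : f ∈ Ideal.span s) : L f = 0 := by
  suffices ∀ g, L (g * f) = 0 by simpa using this 1
  induction hf using Submodule.span_induction with
  | mem p hp => exact hs p hp
  | zero => simp
  | add x y _ _ hx hy => simp [mul_add, hx, hy]
  | smul a x _ hx => simp [← mul_assoc, hx]

theorem Finsupp.sum_single_perm_eq_iff {ι : Type*} [Fintype ι] [DecidableEq ι]
    (σ : Equiv.Perm ι) (e : ι → ℕ) (a : ι →₀ ℕ) :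
    ∑ j, Finsupp.single (σ j) (e j) = a ↔ ∀ j, a (σ j) = e j := by
  have key (i : ι) : (∑ j, Finsupp.single (σ j) (e j)) (σ i) = e i := by
    simp [Finsupp.finsetSum_apply, Finsupp.single_apply, σ.injective.eq_iff]
  rw [Finsupp.ext_iff, ← σ.forall_congr_right]
  simp only [key, eq_comm]

namespace MvPolynomial

theorem coeff_det_X_pow {ι R : Type*} [Fintype ι] [DecidableEq ι] [CommRing R]
    (e : ι → ℕ) (a : ι →₀ ℕ) :
    coeff a (of fun v j => (X v ^ e j : MvPolynomial ι R)).det =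
      (of fun v j => if a v = e j then (1 : R) else 0).det := by
  simp only [det_apply, of_apply, coeff_sum, X_pow_eq_monomial, ← monomial_sum_one, Units.smul_def,
    coeff_smul, coeff_monomial, Finsupp.sum_single_perm_eq_iff, prod_boole, mem_univ, true_implies]

variable {σ 𝕜 : Type*} [RCLike 𝕜]

noncomputable def coeffPairing (g : MvPolynomial σ 𝕜) : MvPolynomial σ 𝕜 →ₗ[𝕜] 𝕜 where
  toFun f := ∑ a ∈ g.support, coeff a f * conj (coeff a g)
  map_add' f f' := by simp only [coeff_add, add_mul, sum_add_distrib]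
  map_smul' c f := by simp only [coeff_smul, smul_eq_mul, mul_assoc, mul_sum, RingHom.id_apply]

theorem coeffPairing_apply (g f : MvPolynomial σ 𝕜) :
    coeffPairing g f = ∑ a ∈ g.support, coeff a f * conj (coeff a g) := rfl

theorem coeffPairing_monomial (g : MvPolynomial σ 𝕜) (a : σ →₀ ℕ) (c : 𝕜) :
    coeffPairing g (monomial a c) = c * conj (coeff a g) := by
  classical
  rw [coeffPairing_apply]
  simp only [coeff_monomial, ite_mul, zero_mul, sum_ite_eq]
  split_ifs with h
  · rfl
  · rw [notMem_support_iff.mp h, map_zero, mul_zero]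

theorem coeffPairing_self_ne_zero {f : MvPolynomial σ 𝕜} (hf : f ≠ 0) : coeffPairing f f ≠ 0 := by
  have hpos : 0 < ∑ a ∈ f.support, ‖coeff a f‖ ^ 2 :=
    sum_pos (fun a ha => pow_pos (norm_pos_iff.mpr (mem_support_iff.mp ha)) 2) (support_nonempty.mpr hf)
  rw [coeffPairing_apply]
  simp_rw [RCLike.mul_conj]
  exact_mod_cast hpos.ne'

end MvPolynomial

section OddAlternant

variable (R : Type*) [CommRing R] {n : ℕ}

noncomputable def oddAlternant (n : ℕ) : MvPolynomial (Fin n) R :=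
  (of fun v j : Fin n => X v ^ (2 * (j : ℕ) + 1)).det

def oddExponentMatrix (a : Fin n →₀ ℕ) : Matrix (Fin n) (Fin n) R :=
  of fun v j => if a v = 2 * (j : ℕ) + 1 then 1 else 0

def shiftMatrix (n k : ℕ) : Matrix (Fin n) (Fin n) R :=
  of fun l j => if (l : ℕ) + k = j then 1 else 0

variable {R}

theorem coeff_oddAlternant (a : Fin n →₀ ℕ) :
    coeff a (oddAlternant R n) = (oddExponentMatrix R a).det :=
  coeff_det_X_pow _ a

theorem oddAlternant_ne_zero [Nontrivial R] : oddAlternant R n ≠ 0 := by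
  let staircase : Fin n →₀ ℕ := Finsupp.equivFunOnFinite.symm fun v => 2 * (v : ℕ) + 1
  have hone : oddExponentMatrix R staircase = 1 := by
    ext v j
    simp [staircase, oddExponentMatrix, one_apply, Fin.ext_iff]
  refine ne_zero_iff.mpr ⟨staircase, ?_⟩
  rw [coeff_oddAlternant, hone, det_one]
  exact one_ne_zero

theorem trace_shiftMatrix {k : ℕ} (hk : 1 ≤ k) : (shiftMatrix R n k).trace = 0 :=
  sum_eq_zero fun _ _ => if_neg (by omega)

theorem oddExponentMatrix_add_single (b : Fin n →₀ ℕ) (i : Fin n) (k : ℕ) :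
    oddExponentMatrix R (b + Finsupp.single i (2 * k)) =
      (oddExponentMatrix R b).updateRow i ((oddExponentMatrix R b * shiftMatrix R n k) i) := by
  ext v j
  rcases eq_or_ne v i with rfl | hvi
  · simp only [updateRow_self, mul_apply, oddExponentMatrix, shiftMatrix, of_apply, mul_ite,
      mul_one, mul_zero, Finsupp.add_apply, Finsupp.single_eq_same]
    by_cases hkj : k ≤ j
    · have hl (l : Fin n) : (l : ℕ) + k = j ↔ l = ⟨j - k, by omega⟩ := by
        rw [Fin.eq_mk_iff_val_eq]; omega
      simp only [hl, sum_ite_eq', mem_univ, if_true]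
      exact if_congr (by omega) rfl rfl
    · rw [if_neg (by omega)]
      exact (sum_eq_zero fun l _ => if_neg (by omega)).symm
  · simp [updateRow_ne hvi, oddExponentMatrix, Finsupp.single_apply, hvi.symm]

end OddAlternant

theorem coeffPairing_oddAlternant_monomial {n : ℕ} (a : Fin n →₀ ℕ) (c : ℂ) :
    coeffPairing (oddAlternant ℂ n) (monomial a c) = c * (oddExponentMatrix ℂ a).det := by
  rw [coeffPairing_monomial, coeff_oddAlternant, RingHom.map_det]
  congr 2
  ext v j
  simp [oddExponentMatrix, apply_ite]

theorem coeffPairing_oddAlternant_mul_psum {n k : ℕ} (hk : 1 ≤ k) (g : MvPolynomial (Fin n) ℂ) :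
    coeffPairing (oddAlternant ℂ n) (g * ∑ i, X i ^ (2 * k)) = 0 := by
  induction g using MvPolynomial.induction_on' with
  | monomial b c =>
    simp only [mul_sum, X_pow_eq_monomial, monomial_mul, mul_one, map_sum,
      coeffPairing_oddAlternant_monomial, oddExponentMatrix_add_single]
    rw [← mul_sum, sum_det_updateRow_mul, trace_shiftMatrix hk, mul_zero, mul_zero]
  | add g₁ g₂ h₁ h₂ => rw [add_mul, map_add, h₁, h₂, add_zero]

theorem deltaB_eq_smul_oddAlternant {n : ℕ} :
    deltaB n = (-1 : ℂ) ^ (∑ i : Fin n, #(Ioi i)) • oddAlternant ℂ n := by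
  have hvan : oddAlternant ℂ n = (∏ v : Fin n, X v) * (vandermonde fun v => X v ^ 2).det := by
    rw [← det_mul_column, oddAlternant]
    congr 1
    ext v j
    simp only [vandermonde, of_apply, ← pow_mul, ← pow_succ']
  have hflip (i : Fin n) : ∏ j ∈ Ioi i, (X i ^ 2 - X j ^ 2 : MvPolynomial (Fin n) ℂ) =
      (-1) ^ #(Ioi i) * ∏ j ∈ Ioi i, (X j ^ 2 - X i ^ 2) := by
    rw [← prod_neg]
    simp_rw [neg_sub]
  rw [hvan, det_vandermonde, deltaB, smul_eq_C_mul, prod_congr rfl fun i _ => hflip i,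
    prod_mul_distrib, prod_pow_eq_pow_sum, map_pow, map_neg, map_one]
  ring

theorem stmt13_general (n : ℕ) :
    deltaB n ∉ Ideal.span ((fun k => ∑ i : Fin n, X i ^ (2 * k)) '' Set.Icc 1 n) := by
  intro hmem
  have hvanish := Ideal.apply_eq_zero_of_mem_span (coeffPairing (oddAlternant ℂ n))
    (by rintro _ ⟨k, hk, rfl⟩ g; exact coeffPairing_oddAlternant_mul_psum hk.1 g) hmem
  rw [deltaB_eq_smul_oddAlternant, map_smul, smul_eq_mul] at hvanish
  exact mul_ne_zero (pow_ne_zero _ (neg_ne_zero.mpr one_ne_zero))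
    (coeffPairing_self_ne_zero oddAlternant_ne_zero) hvanish

/-- `δ^B_n` does not lie in the type B coinvariant ideal
`I^B_n = (p_2, p_4, …, p_{2n})`. -/
theorem stmt13 (n : ℕ) (hn : 1 ≤ n) :
    deltaB n ∉ Ideal.span ((fun k => ∑ i : Fin n, X i ^ (2 * k)) '' Set.Icc 1 n) :=
  stmt13_general n
end

section
/- Let 𝒜 be the arrangement in ℂ^n consisting of all hyperplanes {x_j = ±x_i} for j ∉ J, j < i ≤ n, together with {x_j = 0} for j ∉ J, for a fixed J ⊆ [n]. Define derivations ρ^J_i by: ρ^J_i = Σ_{k=i}^n (∏_{j∉J, j<i}(x_j² − x_k²))·x_k·∂_k if i ∉ J, and ρ^J_i = (∏_{j∉J, j<i}(x_j² − x_i²))·∂_i if i ∈ J. Then each ρ^J_i lies in Der(𝒜), i.e., for every defining linear form α of a hyperplane of 𝒜, α divides ρ^J_i(α). -/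
open MvPolynomial

/-- The defining linear forms of the arrangement `B_J`: `x_j − x_i` and `x_j + x_i`
for `j ∉ J`, `j < i`, together with `x_j` for `j ∉ J`. -/
def formsB {n : ℕ} (J : Finset (Fin n)) : Set (MvPolynomial (Fin n) ℂ) :=
  {p | (∃ j i, j ∉ J ∧ j < i ∧ (p = X j - X i ∨ p = X j + X i)) ∨ (∃ j, j ∉ J ∧ p = X j)}

/-- Coefficients of the derivation `ρ^J_i = Σ_k (rho J i k)·∂_k`:
`ρ^J_i = Σ_{k≥i} (∏_{j∉J, j<i}(x_j² − x_k²))·x_k·∂_k` if `i ∉ J`, and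
`ρ^J_i = (∏_{j∉J, j<i}(x_j² − x_i²))·∂_i` if `i ∈ J`. -/
noncomputable def rho {n : ℕ} (J : Finset (Fin n)) (i k : Fin n) : MvPolynomial (Fin n) ℂ :=
  if i ∈ J then
    (if k = i then ∏ j ∈ Finset.Iio i \ J, (X j ^ 2 - X i ^ 2) else 0)
  else
    (if i ≤ k then (∏ j ∈ Finset.Iio i \ J, (X j ^ 2 - X k ^ 2)) * X k else 0)

/-!
When `i ∉ J`, `ρ^J_i = Σ_{k ≥ i} F(x_k) ∂_k` for the odd polynomial
`F(t) = t · ∏_{j ∉ J, j < i} (x_j² − t²)`, and for odd `F` the form `x_a ∓ x_b` divides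
`F(x_a) ∓ F(x_b)`. In the remaining cases (`a < i` or `i ∈ J`) the coefficient of `ρ^J_i`
at `a ∉ J` vanishes, and the one at `b > a` is either zero or has the factor `x_a² − x_b²`.
-/

theorem Polynomial.add_dvd_eval_add_eval_of_odd {R : Type*} [CommRing R] {p : Polynomial R}
    (hp : ∀ x, p.eval (-x) = -p.eval x) (x y : R) : x + y ∣ p.eval x + p.eval y := by
  simpa [hp] using p.sub_dvd_eval_sub x (-y)

theorem MvPolynomial.sum_mul_pderiv_X {σ R : Type*} [Fintype σ] [CommSemiring R]
    (r : σ → MvPolynomial σ R) (a : σ) : ∑ k, r k * pderiv k (X a) = r a := by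
  rw [Fintype.sum_eq_single a fun k hk => by rw [pderiv_X_of_ne (Ne.symm hk), mul_zero],
    pderiv_X_self, mul_one]

section Rho

variable {n : ℕ} {J : Finset (Fin n)} {i a b k : Fin n}

noncomputable def rhoPoly (J : Finset (Fin n)) (i : Fin n) : Polynomial (MvPolynomial (Fin n) ℂ) :=
  (∏ j ∈ Finset.Iio i \ J, (Polynomial.C (X j ^ 2) - Polynomial.X ^ 2)) * Polynomial.X

theorem eval_rhoPoly_neg (x : MvPolynomial (Fin n) ℂ) :
    (rhoPoly J i).eval (-x) = -(rhoPoly J i).eval x := by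
  simp [rhoPoly, Polynomial.eval_prod]

theorem rho_of_notMem_of_le (hi : i ∉ J) (hik : i ≤ k) :
    rho J i k = (rhoPoly J i).eval (X k) := by
  simp [rho, rhoPoly, Polynomial.eval_prod, hi, hik]

theorem rho_of_mem_of_ne (hi : i ∈ J) (hk : k ≠ i) : rho J i k = 0 := by
  simp [rho, hi, hk]

theorem rho_of_lt (hk : k < i) : rho J i k = 0 := by
  simp [rho, hk.ne, not_le.mpr hk]

theorem X_dvd_rho (ha : a ∉ J) : X a ∣ rho J i a := by
  by_cases hi : i ∈ J
  · rw [rho_of_mem_of_ne hi (ne_of_mem_of_not_mem hi ha).symm]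
    exact dvd_zero _
  · rw [rho, if_neg hi]
    split_ifs
    · exact dvd_mul_left _ _
    · exact dvd_zero _

theorem sq_sub_sq_dvd_rho (ha : a ∉ J) (hai : a < i) : X a ^ 2 - X b ^ 2 ∣ rho J i b := by
  have hmem : a ∈ Finset.Iio i \ J := by simp [hai, ha]
  unfold rho
  split_ifs with _ hbi
  · subst hbi
    exact Finset.dvd_prod_of_mem _ hmem
  · exact dvd_zero _
  · exact (Finset.dvd_prod_of_mem _ hmem).mul_right _
  · exact dvd_zero _

theorem sub_dvd_rho_sub (ha : a ∉ J) (hab : a < b) :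
    X a - X b ∣ rho J i a - rho J i b := by
  rcases lt_or_ge a i with hai | hia
  · rw [rho_of_lt hai, zero_sub, dvd_neg]
    exact (Dvd.intro_left _ (sq_sub_sq _ _).symm).trans (sq_sub_sq_dvd_rho ha hai)
  by_cases hi : i ∈ J
  · rw [rho_of_mem_of_ne hi (ne_of_mem_of_not_mem hi ha).symm,
      rho_of_mem_of_ne hi (hia.trans_lt hab).ne', sub_zero]
    exact dvd_zero _
  · rw [rho_of_notMem_of_le hi hia, rho_of_notMem_of_le hi (hia.trans hab.le)]
    exact Polynomial.sub_dvd_eval_sub _ _ _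

theorem add_dvd_rho_add (ha : a ∉ J) (hab : a < b) :
    X a + X b ∣ rho J i a + rho J i b := by
  rcases lt_or_ge a i with hai | hia
  · rw [rho_of_lt hai, zero_add]
    exact (Dvd.intro _ (sq_sub_sq _ _).symm).trans (sq_sub_sq_dvd_rho ha hai)
  by_cases hi : i ∈ J
  · rw [rho_of_mem_of_ne hi (ne_of_mem_of_not_mem hi ha).symm,
      rho_of_mem_of_ne hi (hia.trans_lt hab).ne', add_zero]
    exact dvd_zero _
  · rw [rho_of_notMem_of_le hi hia, rho_of_notMem_of_le hi (hia.trans hab.le)]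
    exact Polynomial.add_dvd_eval_add_eval_of_odd eval_rhoPoly_neg _ _

end Rho

/-- each `ρ^J_i` lies in `Der(B_J)`: for every defining linear form `α`
of a hyperplane of `B_J`, `α` divides `ρ^J_i(α)`. -/
theorem stmt15 {n : ℕ} (J : Finset (Fin n)) (i : Fin n)
    (α : MvPolynomial (Fin n) ℂ) (hα : α ∈ formsB J) :
    α ∣ ∑ k : Fin n, rho J i k * pderiv k α := by
  obtain ⟨a, b, ha, hab, rfl | rfl⟩ | ⟨a, ha, rfl⟩ := hα
  · simpa only [map_sub, mul_sub, Finset.sum_sub_distrib, sum_mul_pderiv_X]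
      using sub_dvd_rho_sub ha hab
  · simpa only [map_add, mul_add, Finset.sum_add_distrib, sum_mul_pderiv_X]
      using add_dvd_rho_add ha hab
  · simpa only [sum_mul_pderiv_X] using X_dvd_rho ha
end
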